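/- arXiv:2207.09148 — 3 statements merged into one kernel-verified Lean document; each statement's English description precedes it below -/
import Mathlib

section
/- Let L be a complete orthomodular lattice and X = L \ {0} with x ⊥ y iff x ≤ y^⊥. Then (X,⊥) is a Sasaki space, the orthoclosed subsets of X are exactly the sets X ∩ ↓x for x ∈ L, and for A = X ∩ ↓x the restriction-corestriction of the Sasaki projection π_x to a map ∁(A^⊥) → A is a Sasaki map to A. -/
/-- The set of elements orthogonal to every element of `A`. -/
def perpSet {X : Type*} (perp : X → X → Prop) (A : Set X) : Set X :=
  {x | ∀ a ∈ A, perp x a}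

/-- A subset is orthoclosed if it equals its double orthocomplement. -/
def Orthoclosed {X : Type*} (perp : X → X → Prop) (A : Set X) : Prop :=
  perpSet perp (perpSet perp A) = A

/-- `φ` (restricted to `∁(A^⊥)`) is a Sasaki map to the orthoclosed set `A`. -/
def IsSasakiMap {X : Type*} (perp : X → X → Prop) (A : Set X) (φ : X → X) : Prop :=
  (∀ e ∈ (perpSet perp A)ᶜ, φ e ∈ A) ∧
  (∀ e ∈ A, φ e = e) ∧
  (∀ e ∈ (perpSet perp A)ᶜ, ∀ f ∈ (perpSet perp A)ᶜ, (perp (φ e) f ↔ perp e (φ f)))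

/-- A Sasaki space: every orthoclosed subset admits a Sasaki map. -/
def IsSasakiSpace {X : Type*} (perp : X → X → Prop) : Prop :=
  ∀ A : Set X, Orthoclosed perp A → ∃ φ : X → X, IsSasakiMap perp A φ

/-!
In an orthomodular lattice the Sasaki projection `π_x y = x ⊓ (x^⊥ ⊔ y)` fixes `↓x`, vanishes
exactly on `↓x^⊥`, and is self-adjoint for orthogonality: `π_x e ≤ f^⊥ ↔ π_x f ≤ e^⊥`,
because `π_x e ≤ f^⊥` puts `f` below `(π_x e)^⊥ = x^⊥ ⊔ (x ⊓ e^⊥)`, whence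
`π_x f ≤ π_x (x ⊓ e^⊥) = x ⊓ e^⊥`. On the orthoset `L \ {⊥}` the orthocomplement of `↓x`
is `↓x^⊥`, and that of any `A` is `↓(sSup A)^⊥` by completeness, so the orthoclosed sets are
exactly the principal ideals and `π_x` is a Sasaki map onto `↓x`.
-/

structure IsOrthocomplementation {L : Type*} [Lattice L] [BoundedOrder L]
    (oc : L → L) : Prop where
  antitone : ∀ x y : L, x ≤ y → oc y ≤ oc x
  involutive : ∀ x : L, oc (oc x) = x
  inf_eq_bot : ∀ x : L, x ⊓ oc x = ⊥

structure IsOrthomodular {L : Type*} [Lattice L] [BoundedOrder L] (oc : L → L) : Prop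
    extends IsOrthocomplementation oc where
  orthomodular : ∀ x y : L, x ≤ y → y = x ⊔ (y ⊓ oc x)

/-- The Sasaki projection `π_x`. -/
def sasakiProj {L : Type*} [Lattice L] (oc : L → L) (x y : L) : L :=
  x ⊓ (oc x ⊔ y)

theorem sasakiProj_le {L : Type*} [Lattice L] (oc : L → L) (x y : L) : sasakiProj oc x y ≤ x :=
  inf_le_left

def nonbotPerp {L : Type*} [Lattice L] [OrderBot L] (oc : L → L) (a b : {p : L // p ≠ ⊥}) :
    Prop :=
  a.1 ≤ oc b.1

namespace IsOrthocomplementation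

section

variable {L : Type*} [Lattice L] [BoundedOrder L] {oc : L → L}

theorem le_oc_comm (h : IsOrthocomplementation oc) {a b : L} : a ≤ oc b ↔ b ≤ oc a :=
  ⟨fun hab => by simpa only [h.involutive] using h.antitone _ _ hab,
    fun hba => by simpa only [h.involutive] using h.antitone _ _ hba⟩

theorem oc_bot (h : IsOrthocomplementation oc) : oc ⊥ = ⊤ :=
  top_le_iff.mp (h.le_oc_comm.mp bot_le)

theorem oc_sup (h : IsOrthocomplementation oc) (a b : L) : oc (a ⊔ b) = oc a ⊓ oc b :=
  le_antisymm (le_inf (h.antitone _ _ le_sup_left) (h.antitone _ _ le_sup_right)) <|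
    h.le_oc_comm.mpr <| sup_le (h.le_oc_comm.mp inf_le_left) (h.le_oc_comm.mp inf_le_right)

theorem oc_inf (h : IsOrthocomplementation oc) (a b : L) : oc (a ⊓ b) = oc a ⊔ oc b := by
  conv_lhs => rw [← h.involutive a, ← h.involutive b, ← h.oc_sup, h.involutive]

theorem perpSet_setOf_le (h : IsOrthocomplementation oc) (x : L) :
    perpSet (nonbotPerp oc) {y | y.1 ≤ x} = {z | z.1 ≤ oc x} := by
  ext z
  refine ⟨fun hz => ?_, fun hz a ha => hz.trans (h.antitone _ _ ha)⟩
  by_cases hx : x = ⊥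
  · simp [hx, h.oc_bot]
  · exact hz ⟨x, hx⟩ le_rfl

end

section

variable {L : Type*} [CompleteLattice L] {oc : L → L}

theorem le_oc_sSup_iff (h : IsOrthocomplementation oc) {b : L} {s : Set L} :
    b ≤ oc (sSup s) ↔ ∀ a ∈ s, b ≤ oc a := by
  simp only [h.le_oc_comm (b := sSup s), sSup_le_iff, h.le_oc_comm (a := b)]

theorem perpSet_eq_setOf_le_oc_sSup (h : IsOrthocomplementation oc) (A : Set {p : L // p ≠ ⊥}) :
    perpSet (nonbotPerp oc) A = {z | z.1 ≤ oc (sSup (Subtype.val '' A))} := by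
  ext z
  simp only [perpSet, nonbotPerp, Set.mem_ofPred_eq, h.le_oc_sSup_iff, Set.forall_mem_image]

theorem orthoclosed_nonbotPerp_iff (h : IsOrthocomplementation oc) (A : Set {p : L // p ≠ ⊥}) :
    Orthoclosed (nonbotPerp oc) A ↔ ∃ x : L, A = {y | y.1 ≤ x} := by
  constructor
  · intro hA
    refine ⟨sSup (Subtype.val '' A), ?_⟩
    conv_lhs => rw [← hA]
    rw [h.perpSet_eq_setOf_le_oc_sSup A, h.perpSet_setOf_le, h.involutive]
  · rintro ⟨x, rfl⟩
    rw [Orthoclosed, h.perpSet_setOf_le, h.perpSet_setOf_le, h.involutive]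

end

end IsOrthocomplementation

namespace IsOrthomodular

section

variable {L : Type*} [Lattice L] [BoundedOrder L] {oc : L → L}

theorem sasakiProj_of_le (h : IsOrthomodular oc) {x a : L} (ha : a ≤ x) :
    sasakiProj oc x a = a := by
  have ha' : a ≤ sasakiProj oc x a := le_inf ha le_sup_right
  -- `π_x a ⊓ a^⊥` lies below `(x^⊥ ⊔ a) ⊓ (x^⊥ ⊔ a)^⊥ = ⊥`
  have hbot : sasakiProj oc x a ⊓ oc a = ⊥ := by
    refine le_bot_iff.mp (le_of_le_of_eq ?_ (h.inf_eq_bot (oc x ⊔ a)))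
    rw [h.oc_sup, h.involutive]
    exact le_inf (inf_le_left.trans inf_le_right)
      (le_inf (inf_le_left.trans inf_le_left) inf_le_right)
  calc sasakiProj oc x a = a ⊔ (sasakiProj oc x a ⊓ oc a) := h.orthomodular _ _ ha'
    _ = a := by rw [hbot, sup_bot_eq]

theorem sasakiProj_eq_bot_iff (h : IsOrthomodular oc) {x y : L} :
    sasakiProj oc x y = ⊥ ↔ y ≤ oc x := by
  constructor
  · intro hxy
    calc y ≤ oc x ⊔ y := le_sup_right
      _ = oc x ⊔ ((oc x ⊔ y) ⊓ oc (oc x)) := h.orthomodular _ _ le_sup_left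
      _ = oc x := by rw [h.involutive, inf_comm, ← sasakiProj, hxy, sup_bot_eq]
  · intro hy
    rw [sasakiProj, sup_eq_left.mpr hy, h.inf_eq_bot]

theorem sasakiProj_le_oc_of_le_oc (h : IsOrthomodular oc) {x e f : L}
    (hef : sasakiProj oc x e ≤ oc f) : sasakiProj oc x f ≤ oc e := by
  have hf : f ≤ oc x ⊔ (x ⊓ oc e) := by
    rwa [h.le_oc_comm, sasakiProj, h.oc_inf, h.oc_sup, h.involutive] at hef
  calc sasakiProj oc x f ≤ sasakiProj oc x (x ⊓ oc e) :=
        inf_le_inf_left x (sup_le le_sup_left hf)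
    _ = x ⊓ oc e := h.sasakiProj_of_le inf_le_left
    _ ≤ oc e := inf_le_right

theorem sasakiProj_le_oc_comm (h : IsOrthomodular oc) {x e f : L} :
    sasakiProj oc x e ≤ oc f ↔ sasakiProj oc x f ≤ oc e :=
  ⟨h.sasakiProj_le_oc_of_le_oc, h.sasakiProj_le_oc_of_le_oc⟩

theorem sasakiProj_ne_bot_of_mem_compl_perpSet (h : IsOrthomodular oc) {x : L}
    {y : {p : L // p ≠ ⊥}} (hy : y ∈ (perpSet (nonbotPerp oc) {z | z.1 ≤ x})ᶜ) :
    sasakiProj oc x y.1 ≠ ⊥ := by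
  rwa [Set.mem_compl_iff, h.perpSet_setOf_le, Set.mem_ofPred_eq, ← h.sasakiProj_eq_bot_iff] at hy

theorem isSasakiMap_of_eq_sasakiProj (h : IsOrthomodular oc) {x : L}
    {φ : {p : L // p ≠ ⊥} → {p : L // p ≠ ⊥}}
    (hφ : ∀ y ∈ (perpSet (nonbotPerp oc) {y | y.1 ≤ x})ᶜ, (φ y).1 = sasakiProj oc x y.1) :
    IsSasakiMap (nonbotPerp oc) {y | y.1 ≤ x} φ := by
  have hA : ∀ e : {p : L // p ≠ ⊥}, e.1 ≤ x →
      e ∈ (perpSet (nonbotPerp oc) {y | y.1 ≤ x})ᶜ :=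
    fun e he he' => by
      rw [h.perpSet_setOf_le] at he'
      exact e.2 (le_bot_iff.mp ((le_inf he he').trans (h.inf_eq_bot x).le))
  refine ⟨fun e he => ?_, fun e he => ?_, fun e he f hf => ?_⟩
  · exact (hφ e he).le.trans (sasakiProj_le oc x e.1)
  · exact Subtype.ext ((hφ e (hA e he)).trans (h.sasakiProj_of_le he))
  · rw [nonbotPerp, nonbotPerp, hφ e he, hφ f hf, h.le_oc_comm (a := e.1)]
    exact h.sasakiProj_le_oc_comm

end

theorem isSasakiSpace_nonbotPerp {L : Type*} [CompleteLattice L] {oc : L → L}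
    (h : IsOrthomodular oc) : IsSasakiSpace (nonbotPerp oc) := by
  intro A hA
  obtain ⟨x, rfl⟩ := (h.orthoclosed_nonbotPerp_iff A).mp hA
  classical
  refine ⟨fun y => if hy : sasakiProj oc x y.1 = ⊥ then y else ⟨_, hy⟩,
    h.isSasakiMap_of_eq_sasakiProj fun y hy => ?_⟩
  simp [h.sasakiProj_ne_bot_of_mem_compl_perpSet hy]

end IsOrthomodular

/-- for a complete orthomodular lattice `L`, the orthoset
`X = L \ {⊥}` with `x ⊥ y` iff `x ≤ y^⊥` is a Sasaki space, its orthoclosed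
subsets are exactly the sets `X ∩ ↓x`, and on `X ∩ ↓x` the Sasaki projection
`π_x` restricts–corestricts to a Sasaki map. -/
theorem complete_OML_gives_sasaki_space {L : Type*} [CompleteLattice L]
    (oc : L → L)
    (horder : ∀ x y : L, x ≤ y → oc y ≤ oc x)
    (hinv : ∀ x : L, oc (oc x) = x)
    (hbot : ∀ x : L, x ⊓ oc x = ⊥)
    (hOM : ∀ x y : L, x ≤ y → y = x ⊔ (y ⊓ oc x)) :
    letI X := {p : L // p ≠ ⊥}
    letI perp : X → X → Prop := fun a b => a.1 ≤ oc b.1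
    IsSasakiSpace perp ∧
    (∀ A : Set X, Orthoclosed perp A ↔ ∃ x : L, A = {y : X | y.1 ≤ x}) ∧
    (∀ x : L, ∀ φ : X → X,
      (∀ y ∈ (perpSet perp {y : X | y.1 ≤ x})ᶜ, (φ y).1 = x ⊓ (oc x ⊔ y.1)) →
      IsSasakiMap perp {y : X | y.1 ≤ x} φ) ∧
    (∀ x : L, ∀ y : {p : L // p ≠ ⊥},
      y ∈ (perpSet (fun a b => a.1 ≤ oc b.1) {z : {p : L // p ≠ ⊥} | z.1 ≤ x})ᶜ →
      x ⊓ (oc x ⊔ y.1) ≠ ⊥) := by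
  have h : IsOrthomodular oc := ⟨⟨horder, hinv, hbot⟩, hOM⟩
  exact ⟨h.isSasakiSpace_nonbotPerp, h.orthoclosed_nonbotPerp_iff,
    fun _ _ hφ => h.isSasakiMap_of_eq_sasakiProj hφ,
    fun _ _ hy => h.sasakiProj_ne_bot_of_mem_compl_perpSet hy⟩
end

section
/- An orthoset (X,⊥) is a Sasaki space if and only if for every ⊥-set D ⊆ X there is a Sasaki map to D^⊥. -/
section Orthoset

variable {X : Type*} {perp : X → X → Prop} {A B C E : Set X}

lemma perpSet_anti (h : A ⊆ B) : perpSet perp B ⊆ perpSet perp A :=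
  fun _ hx a ha => hx a (h ha)

lemma subset_perpSet_perpSet (hsymm : ∀ x y, perp x y → perp y x) (A : Set X) :
    A ⊆ perpSet perp (perpSet perp A) :=
  fun a ha _ hy => hsymm _ _ (hy a ha)

lemma subset_perpSet_comm (hsymm : ∀ x y, perp x y → perp y x) (h : A ⊆ perpSet perp B) :
    B ⊆ perpSet perp A :=
  fun b hb _ ha => hsymm _ _ (h ha b hb)

lemma orthoclosed_perpSet (hsymm : ∀ x y, perp x y → perp y x) (A : Set X) :
    Orthoclosed perp (perpSet perp A) :=
  (perpSet_anti (subset_perpSet_perpSet hsymm A)).antisymm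
    (subset_perpSet_perpSet hsymm (perpSet perp A))

lemma notMem_perpSet_of_mem (hirrefl : ∀ x, ¬ perp x x) {a : X} (ha : a ∈ A) :
    a ∉ perpSet perp A :=
  fun h => hirrefl a (h a ha)

lemma exists_maximal_pairwise_subset (perp : X → X → Prop) (B : Set X) :
    ∃ E, Maximal (fun S => S ⊆ B ∧ S.Pairwise perp) E :=
  zorn_subset _ fun c hc hchain =>
    ⟨⋃₀ c, ⟨Set.sUnion_subset fun _ hs => (hc hs).1, hchain.pairwise_sUnion.2 fun _ hs => (hc hs).2⟩,
      fun _ hs => Set.subset_sUnion_of_mem hs⟩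

lemma IsSasakiMap.apply_mem_perpSet_of_subset (hirrefl : ∀ x, ¬ perp x x) {φ : X → X}
    (hφ : IsSasakiMap perp C φ) (hAC : A ⊆ C) {y : X} (hy : y ∈ perpSet perp A)
    (hyC : y ∉ perpSet perp C) : φ y ∈ perpSet perp A := by
  intro a ha
  have haC : a ∉ perpSet perp C := notMem_perpSet_of_mem hirrefl (hAC ha)
  have hadj := hφ.2.2 y hyC a haC
  rw [hφ.2.1 a (hAC ha)] at hadj
  exact hadj.2 (hy a ha)

lemma perpSet_perpSet_eq_of_maximal (hsymm : ∀ x y, perp x y → perp y x)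
    (hirrefl : ∀ x, ¬ perp x x) (hE : Maximal (fun S => S ⊆ perpSet perp A ∧ S.Pairwise perp) E)
    {φ : X → X} (hφ : IsSasakiMap perp (perpSet perp E) φ) :
    perpSet perp (perpSet perp E) = perpSet perp A := by
  have hAE : A ⊆ perpSet perp E := subset_perpSet_comm hsymm hE.prop.1
  refine (perpSet_anti hAE).antisymm fun y hy => by_contra fun hyE => ?_
  have hφyE : φ y ∈ perpSet perp E := hφ.1 y hyE
  have hφyA : φ y ∈ perpSet perp A := hφ.apply_mem_perpSet_of_subset hirrefl hAE hy hyE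
  have hinsert : insert (φ y) E ⊆ perpSet perp A ∧ (insert (φ y) E).Pairwise perp :=
    ⟨Set.insert_subset hφyA hE.prop.1,
      hE.prop.2.insert fun e he _ => ⟨hφyE e he, hsymm _ _ (hφyE e he)⟩⟩
  exact notMem_perpSet_of_mem hirrefl (hE.mem_of_prop_insert hinsert) hφyE

end Orthoset

/-- an orthoset is a Sasaki space iff every ⊥-set `D` admits a
Sasaki map to `D^⊥`. -/
theorem sasakiSpace_iff_perpSets {X : Type*} (perp : X → X → Prop)
    (hsymm : ∀ x y, perp x y → perp y x) (hirrefl : ∀ x, ¬ perp x x) :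
    IsSasakiSpace perp ↔
      ∀ D : Set X, (∀ d ∈ D, ∀ e ∈ D, d ≠ e → perp d e) →
        ∃ φ : X → X, IsSasakiMap perp (perpSet perp D) φ := by
  refine ⟨fun h D _ => h _ (orthoclosed_perpSet hsymm D), fun h A hA => ?_⟩
  obtain ⟨E, hE⟩ := exists_maximal_pairwise_subset perp (perpSet perp A)
  obtain ⟨φ, hφ⟩ := h E hE.prop.2
  have hEA : perpSet perp E = A :=
    calc perpSet perp E = perpSet perp (perpSet perp (perpSet perp E)) :=
          (orthoclosed_perpSet hsymm E).symm
      _ = perpSet perp (perpSet perp A) := by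
          rw [perpSet_perpSet_eq_of_maximal hsymm hirrefl hE hφ]
      _ = A := hA
  exact ⟨φ, hEA ▸ hφ⟩
end

section
/- Let (X,⊥) be a Sasaki space, A an orthoclosed subset, and e ∉ A. Then A ∨ {e}^⊥⊥ = A ∨ {φ_{A^⊥}(e)}^⊥⊥ in C(X,⊥), where φ_{A^⊥} is a Sasaki map to A^⊥. -/
/-!
For `x ∈ A^⊥` the Sasaki map fixes `x`, so its adjointness gives `x ⊥ e ↔ x ⊥ φ e`. Hence
`A ∪ {e}` and `A ∪ {φ e}` have the same orthocomplement, and so the same double orthocomplement.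
-/

section Orthoset

variable {X : Type*} {perp : X → X → Prop}

theorem mem_perpSet_union_singleton {A : Set X} {e x : X} :
    x ∈ perpSet perp (A ∪ {e}) ↔ x ∈ perpSet perp A ∧ perp x e := by
  simp only [perpSet, Set.mem_ofPred_eq, Set.mem_union, Set.mem_singleton_iff, or_imp,
    forall_and, forall_eq]

theorem notMem_perpSet_of_mem_s17 (hirrefl : ∀ x, ¬ perp x x) {B : Set X} {f : X} (hf : f ∈ B) :
    f ∉ perpSet perp B :=
  fun hperp => hirrefl f (hperp f hf)

theorem IsSasakiMap.perp_iff_of_mem (hsymm : ∀ x y, perp x y → perp y x)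
    (hirrefl : ∀ x, ¬ perp x x) {B : Set X} {φ : X → X} (hφ : IsSasakiMap perp B φ)
    {e f : X} (he : e ∉ perpSet perp B) (hf : f ∈ B) :
    perp f (φ e) ↔ perp f e := by
  have adjoint := hφ.2.2 e he f (notMem_perpSet_of_mem_s17 hirrefl hf)
  rw [hφ.2.1 f hf] at adjoint
  exact ⟨fun h => hsymm _ _ (adjoint.mp (hsymm _ _ h)),
    fun h => hsymm _ _ (adjoint.mpr (hsymm _ _ h))⟩

theorem IsSasakiMap.perpSet_union_image (hsymm : ∀ x y, perp x y → perp y x)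
    (hirrefl : ∀ x, ¬ perp x x) {A : Set X} {φ : X → X}
    (hφ : IsSasakiMap perp (perpSet perp A) φ) {e : X}
    (he : e ∉ perpSet perp (perpSet perp A)) :
    perpSet perp (A ∪ {φ e}) = perpSet perp (A ∪ {e}) := by
  ext x
  simp only [mem_perpSet_union_singleton]
  exact and_congr_right fun hx => hφ.perp_iff_of_mem hsymm hirrefl he hx

end Orthoset

theorem join_with_atom_eq_join_with_sasaki_image_general {X : Type*} (perp : X → X → Prop)
    (hsymm : ∀ x y, perp x y → perp y x) (hirrefl : ∀ x, ¬ perp x x)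
    (A : Set X) (hA : Orthoclosed perp A) (e : X) (he : e ∉ A)
    (φ : X → X) (hφ : IsSasakiMap perp (perpSet perp A) φ) :
    perpSet perp (perpSet perp (A ∪ {e})) =
      perpSet perp (perpSet perp (A ∪ {φ e})) := by
  have he_dom : e ∉ perpSet perp (perpSet perp A) := by rwa [hA]
  rw [hφ.perpSet_union_image hsymm hirrefl he_dom]

/-- in a Sasaki space, for orthoclosed `A` and `e ∉ A`,
`A ∨ {e} = A ∨ {φ_{A^⊥}(e)}` where `φ_{A^⊥}` is a Sasaki map to `A^⊥`. -/
theorem join_with_atom_eq_join_with_sasaki_image {X : Type*} (perp : X → X → Prop)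
    (hsymm : ∀ x y, perp x y → perp y x) (hirrefl : ∀ x, ¬ perp x x)
    (hSasaki : IsSasakiSpace perp)
    (A : Set X) (hA : Orthoclosed perp A) (e : X) (he : e ∉ A)
    (φ : X → X) (hφ : IsSasakiMap perp (perpSet perp A) φ) :
    perpSet perp (perpSet perp (A ∪ {e})) =
      perpSet perp (perpSet perp (A ∪ {φ e})) :=
  join_with_atom_eq_join_with_sasaki_image_general perp hsymm hirrefl A hA e he φ hφ
end
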